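/- For all n ≥ 1, the number of permutations of [n] avoiding both generalized patterns 1-23 and 23-1 equals 2^{n-1}. -/
import Mathlib

def contains123 {n : ℕ} (π : Equiv.Perm (Fin n)) : Prop :=
  ∃ i j : ℕ, ∃ (_ : i < j) (hj : j + 1 < n),
    π ⟨i, by omega⟩ < π ⟨j, by omega⟩ ∧ π ⟨j, by omega⟩ < π ⟨j + 1, hj⟩

def contains23_1 {n : ℕ} (π : Equiv.Perm (Fin n)) : Prop :=
  ∃ i j : ℕ, ∃ (_ : i + 1 < j) (hj : j < n),
    π ⟨j, hj⟩ < π ⟨i, by omega⟩ ∧ π ⟨i, by omega⟩ < π ⟨i + 1, by omega⟩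

section Rank
variable {n : ℕ}

noncomputable def rk (f : Fin n → ℕ) (hf : Function.Injective f) : Fin n → Fin n :=
  fun v => (Finset.orderIsoOfFin (Finset.univ.image f)
    (by rw [Finset.card_image_of_injective _ hf, Finset.card_univ, Fintype.card_fin])).symm
    ⟨f v, Finset.mem_image_of_mem f (Finset.mem_univ v)⟩

lemma rk_lt (f : Fin n → ℕ) (hf : Function.Injective f) {v w : Fin n} :
    rk f hf v < rk f hf w ↔ f v < f w := by
  unfold rk
  rw [OrderIso.lt_iff_lt]
  rfl

lemma rk_bij (f : Fin n → ℕ) (hf : Function.Injective f) : Function.Bijective (rk f hf) := by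
  rw [Fintype.bijective_iff_injective_and_card]
  refine ⟨fun v w h => ?_, rfl⟩
  by_contra hvw
  rcases lt_or_gt_of_ne (fun h' : f v = f w => hvw (hf h')) with h' | h'
  · exact absurd ((rk_lt f hf).2 h') (by simp [h])
  · exact absurd ((rk_lt f hf).2 h') (by simp [h])

/-- two bijections of `Fin n` reflecting the same order are equal -/
lemma bij_order_unique (g h : Fin n → Fin n) (hg : Function.Bijective g)
    (hh : Function.Bijective h) (H : ∀ v w, g v < g w ↔ h v < h w) : g = h := by
  funext v
  have key : ∀ (g : Fin n → Fin n), Function.Bijective g →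
      ((Finset.univ.filter (fun w => g w < g v)).card = (g v).val) := by
    intro g hg
    have : (Finset.univ.filter (fun w => g w < g v)).card = (Finset.Iio (g v)).card := by
      apply Finset.card_bij (fun w _ => g w)
      · intro a ha; simp at ha ⊢; exact ha
      · intro a ha b hb hab; exact hg.1 hab
      · intro b hb
        obtain ⟨a, rfl⟩ := hg.2 b
        simp at hb ⊢; exact ⟨a, hb, rfl⟩
    rw [this, Fin.card_Iio]
  have h1 := key g hg
  have h2 := key h hh
  have heq : (Finset.univ.filter (fun w => g w < g v))
      = (Finset.univ.filter (fun w => h w < h v)) := by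
    ext w; simp [H]
  apply Fin.ext
  rw [← h1, heq, h2]

end Rank

section Main
variable {m : ℕ}

def key (s : Fin m → Bool) (v : Fin (m+1)) : ℕ :=
  if h : v.val = 0 then m + 1
  else if s ⟨v.val - 1, by have := v.isLt; omega⟩ then 2*(m+1) - v.val else (m+1) - v.val

lemma key_zero (s : Fin m → Bool) : key s 0 = m + 1 := by
  rw [key]; simp

lemma key_cases (s : Fin m → Bool) (v : Fin (m+1)) (hv : v.val ≠ 0) :
    key s v = 2*(m+1) - v.val ∨ key s v = (m+1) - v.val := by
  rw [key, dif_neg hv]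
  split_ifs
  · left; rfl
  · right; rfl

lemma key_inj (s : Fin m → Bool) : Function.Injective (key s) := by
  intro v w h
  have hv := v.isLt; have hw := w.isLt
  unfold key at h
  apply Fin.ext
  split_ifs at h <;> omega

noncomputable def pm (s : Fin m → Bool) : Equiv.Perm (Fin (m+1)) :=
  (Equiv.ofBijective _ (rk_bij (key s) (key_inj s))).symm

lemma pm_symm_lt (s : Fin m → Bool) {v w : Fin (m+1)} :
    (pm s).symm v < (pm s).symm w ↔ key s v < key s w :=
  rk_lt (key s) (key_inj s)

/-- characterization: avoiding both patterns iff every ascent starts with value 0 -/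
lemma avoid_iff (π : Equiv.Perm (Fin (m+1))) :
    (¬ contains123 π ∧ ¬ contains23_1 π) ↔
      (∀ j (hj : j + 1 < m + 1), π ⟨j, by omega⟩ < π ⟨j + 1, hj⟩ → π ⟨j, by omega⟩ = 0) := by
  constructor
  · rintro ⟨h1, h2⟩ j hj hasc
    by_contra h0
    set k := π.symm 0 with hk
    have hπk : π k = 0 := π.apply_symm_apply 0
    have hkj : k.val ≠ j := by
      intro e
      apply h0
      rw [show (⟨j, by omega⟩ : Fin (m+1)) = k from Fin.ext e.symm, hπk]
    have hkj1 : k.val ≠ j + 1 := by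
      intro e
      have : π ⟨j+1, hj⟩ = 0 := by
        rw [show (⟨j+1, hj⟩ : Fin (m+1)) = k from Fin.ext e.symm, hπk]
      rw [this] at hasc
      exact absurd hasc (Fin.not_lt_zero _)
    have hpos : (0 : Fin (m+1)) < π ⟨j, by omega⟩ := Fin.pos_of_ne_zero h0
    have hkk : π ⟨k.val, k.isLt⟩ = 0 := by
      rw [show (⟨k.val, k.isLt⟩ : Fin (m+1)) = k from Fin.ext rfl, hπk]
    rcases lt_or_gt_of_ne hkj with hlt | hgt
    · exact h1 ⟨k.val, j, hlt, hj, by rw [hkk]; exact ⟨hpos, hasc⟩⟩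
    · have hgt' : j + 1 < k.val := by omega
      exact h2 ⟨j, k.val, hgt', k.isLt, by rw [hkk]; exact ⟨hpos, hasc⟩⟩
  · intro H
    constructor
    · rintro ⟨i, j, hij, hj, hlt1, hlt2⟩
      have := H j hj hlt2
      rw [this] at hlt1
      exact absurd hlt1 (Fin.not_lt_zero _)
    · rintro ⟨i, j, hij, hj, hlt1, hlt2⟩
      have := H i (by omega) hlt2
      rw [this] at hlt1
      exact absurd hlt1 (Fin.not_lt_zero _)

/-- the permutation as a function on naturals -/
def g (π : Equiv.Perm (Fin (m+1))) (p : ℕ) : ℕ :=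
  if h : p < m + 1 then (π ⟨p, h⟩).val else 0

lemma g_symm (π : Equiv.Perm (Fin (m+1))) (v : Fin (m+1)) :
    g π (π.symm v).val = v.val := by
  rw [g, dif_pos (π.symm v).isLt]
  congr 1
  rw [show (⟨(π.symm v).val, (π.symm v).isLt⟩ : Fin (m+1)) = π.symm v from Fin.ext rfl]
  exact π.apply_symm_apply v

lemma g_inj (π : Equiv.Perm (Fin (m+1))) {p q : ℕ} (hp : p < m+1) (hq : q < m+1)
    (h : g π p = g π q) : p = q := by
  rw [g, dif_pos hp, g, dif_pos hq] at h
  exact Fin.mk.inj_iff.mp (π.injective (Fin.ext h))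

lemma g_ne_zero (π : Equiv.Perm (Fin (m+1))) {r : ℕ} (hr : r < m+1)
    (hz : r ≠ (π.symm 0).val) : g π r ≠ 0 := by
  intro h
  apply hz
  rw [g, dif_pos hr] at h
  have h2 : π ⟨r, hr⟩ = 0 := Fin.ext h
  have h3 := congrArg π.symm h2
  rw [Equiv.symm_apply_apply] at h3
  exact congrArg Fin.val h3

section Struct
variable (π : Equiv.Perm (Fin (m+1)))
  (H : ∀ j (hj : j + 1 < m + 1), π ⟨j, by omega⟩ < π ⟨j + 1, hj⟩ → π ⟨j, by omega⟩ = 0)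

include H in
lemma step (p : ℕ) (hp : p + 1 < m + 1) (h0 : g π p ≠ 0) : g π (p+1) < g π p := by
  have hgp : g π p = (π ⟨p, by omega⟩).val := by rw [g, dif_pos (by omega : p < m + 1)]
  have hgp1 : g π (p+1) = (π ⟨p+1, hp⟩).val := by rw [g, dif_pos hp]
  have hne : g π (p+1) ≠ g π p := fun h => by
    have := g_inj π hp (by omega) h; omega
  have hnlt : ¬ (g π p < g π (p+1)) := by
    intro hlt
    apply h0
    have hasc : π ⟨p, by omega⟩ < π ⟨p+1, hp⟩ := by
      rw [Fin.lt_def]; omega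
    have := H p hp hasc
    rw [hgp, this]
    rfl
  omega

include H in
lemma decr : ∀ q p : ℕ, q < m + 1 → p < q → (∀ r, p ≤ r → r < q → g π r ≠ 0) →
    g π q < g π p := by
  intro q
  induction q with
  | zero => omega
  | succ q ih =>
    intro p hq hpq hr
    rcases eq_or_lt_of_le (Nat.lt_succ_iff.mp hpq) with rfl | hlt
    · exact step π H p hq (hr p le_rfl (by omega))
    · have h1 := ih p (by omega) hlt (fun r h1 h2 => hr r h1 (by omega))
      have h2 := step π H q hq (hr q (by omega) (by omega))
      omega

include H in
lemma comp {p q : ℕ} (hq : q < m + 1) (hpq : p < q)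
    (hside : ¬ (p ≤ (π.symm 0).val ∧ (π.symm 0).val < q)) : g π q < g π p :=
  decr π H q p hq hpq (fun r h1 h2 => g_ne_zero π (by omega) (by omega))

end Struct

def mkS (π : Equiv.Perm (Fin (m+1))) : Fin m → Bool :=
  fun k => decide ((π.symm 0).val < (π.symm ⟨k.val + 1, by have := k.isLt; omega⟩).val)

lemma key_mkS (π : Equiv.Perm (Fin (m+1))) (v : Fin (m+1)) (hv : v.val ≠ 0) :
    key (mkS π) v =
      if (π.symm 0).val < (π.symm v).val then 2*(m+1) - v.val else (m+1) - v.val := by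
  rw [key, dif_neg hv]
  have he : (⟨(⟨v.val - 1, by have := v.isLt; omega⟩ : Fin m).val + 1,
      by have := v.isLt; simp; omega⟩ : Fin (m+1)) = v := by
    apply Fin.ext; simp; omega
  rw [mkS]
  simp only [he, decide_eq_true_eq]

end Main

section Main2
variable {m : ℕ}

lemma pz_ne (π : Equiv.Perm (Fin (m+1))) (a : Fin (m+1)) (ha : a.val ≠ 0) :
    (π.symm a).val ≠ (π.symm 0).val := fun h =>
  ha (by simpa using congrArg Fin.val (π.symm.injective (Fin.ext h)))

lemma order_iff (π : Equiv.Perm (Fin (m+1)))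
    (H : ∀ j (hj : j + 1 < m + 1), π ⟨j, by omega⟩ < π ⟨j + 1, hj⟩ → π ⟨j, by omega⟩ = 0)
    (v w : Fin (m+1)) :
    π.symm v < π.symm w ↔ key (mkS π) v < key (mkS π) w := by
  have hz' : (π.symm 0).val < m + 1 := (π.symm 0).isLt
  rw [Fin.lt_def]
  rcases eq_or_ne v w with rfl | hvw
  · simp
  have hpq : (π.symm v).val ≠ (π.symm w).val :=
    fun h => hvw (π.symm.injective (Fin.ext h))
  have main : ∀ a b : Fin (m+1), a.val ≠ 0 → b.val ≠ 0 →
      (π.symm a).val < (π.symm b).val →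
      ¬((π.symm a).val < (π.symm 0).val ∧ (π.symm 0).val < (π.symm b).val) →
      b.val < a.val := by
    intro a b ha hb hab hside
    have haz := pz_ne π a ha
    have hc := comp π H (π.symm b).isLt hab (by omega)
    rw [g_symm, g_symm] at hc
    exact hc
  rcases eq_or_ne v 0 with rfl | hv
  · have hw : w.val ≠ 0 := fun h => hvw (Fin.ext (by simpa using h.symm))
    rw [key_mkS π w hw, key_zero]
    have hwlt := w.isLt
    split_ifs with h <;> omega
  · have hv' : v.val ≠ 0 := fun h => hv (Fin.ext (by simpa using h))
    rcases eq_or_ne w 0 with rfl | hw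
    · rw [key_mkS π v hv', key_zero]
      have hvlt := v.isLt
      have hvz := pz_ne π v hv'
      split_ifs with h <;> omega
    · have hw' : w.val ≠ 0 := fun h => hw (Fin.ext (by simpa using h))
      rw [key_mkS π v hv', key_mkS π w hw']
      have hvz := pz_ne π v hv'
      have hwz := pz_ne π w hw'
      have hvlt := v.isLt
      have hwlt := w.isLt
      have hv1 : 1 ≤ v.val := by omega
      have hw1 : 1 ≤ w.val := by omega
      rcases Nat.lt_trichotomy (π.symm v).val (π.symm w).val with h | h | h
      · by_cases hs : (π.symm v).val < (π.symm 0).val ∧ (π.symm 0).val < (π.symm w).val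
        · rw [if_neg (by omega), if_pos (by omega)]
          omega
        · have hba := main v w hv' hw' h hs
          by_cases h2 : (π.symm 0).val < (π.symm v).val
          · rw [if_pos h2, if_pos (by omega)]
            omega
          · rw [if_neg h2, if_neg (by omega)]
            omega
      · exact absurd h hpq
      · by_cases hs : (π.symm w).val < (π.symm 0).val ∧ (π.symm 0).val < (π.symm v).val
        · rw [if_pos (by omega), if_neg (by omega)]
          omega
        · have hba := main w v hw' hv' h hs
          by_cases h2 : (π.symm 0).val < (π.symm v).val
          · rw [if_pos h2, if_pos (by omega)]
            omega
          · rw [if_neg h2, if_neg (by omega)]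
            omega

end Main2

section Main3
variable {m : ℕ}

lemma pm_avoids (s : Fin m → Bool) :
    ∀ j (hj : j + 1 < m + 1), pm s ⟨j, by omega⟩ < pm s ⟨j + 1, hj⟩ →
      pm s ⟨j, by omega⟩ = 0 := by
  intro j hj hasc
  by_contra h0
  set v := pm s ⟨j, by omega⟩ with hv
  set w := pm s ⟨j + 1, hj⟩ with hw
  have hsv : (pm s).symm v = ⟨j, by omega⟩ := Equiv.symm_apply_apply _ _
  have hsw : (pm s).symm w = ⟨j + 1, hj⟩ := Equiv.symm_apply_apply _ _
  have hk : key s v < key s w := by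
    rw [← pm_symm_lt s, hsv, hsw]
    exact Fin.mk_lt_mk.2 (lt_add_one j)
  have hv0 : v.val ≠ 0 := fun h => h0 (Fin.ext (by simpa using h))
  have hvw : v.val < w.val := hasc
  have hw0 : w.val ≠ 0 := by omega
  have hvlt := v.isLt
  have hwlt := w.isLt
  have h1 : key s v < m + 1 ∧ m + 1 < key s w := by
    rcases key_cases s v hv0 with e1 | e1 <;> rcases key_cases s w hw0 with e2 | e2 <;>
      rw [e1, e2] at hk ⊢ <;> omega
  have a1 : (pm s).symm v < (pm s).symm 0 := (pm_symm_lt s).2 (by rw [key_zero]; exact h1.1)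
  have a2 : (pm s).symm 0 < (pm s).symm w := (pm_symm_lt s).2 (by rw [key_zero]; exact h1.2)
  rw [hsv] at a1
  rw [hsw] at a2
  rw [Fin.lt_def] at a1 a2
  simp at a1 a2
  omega

lemma mkS_pm (s : Fin m → Bool) : mkS (pm s) = s := by
  funext k
  have hk := k.isLt
  have hlt : ((pm s).symm 0).val < ((pm s).symm ⟨k.val + 1, by omega⟩).val ↔
      key s 0 < key s ⟨k.val + 1, by omega⟩ := by
    rw [← Fin.lt_def]
    exact pm_symm_lt s
  have hkey : key s ⟨k.val + 1, by omega⟩ =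
      if s k then 2*(m+1) - (k.val + 1) else (m+1) - (k.val + 1) := by
    rw [key, dif_neg (by simp)]
    have he : (⟨((⟨k.val + 1, by omega⟩ : Fin (m+1)).val - 1), by simp⟩ : Fin m) = k := by
      apply Fin.ext; simp
    rw [he]
  rw [key_zero, hkey] at hlt
  show decide _ = s k
  cases hsk : s k with
  | true =>
    rw [hsk, if_pos rfl] at hlt
    exact decide_eq_true (hlt.2 (by omega))
  | false =>
    rw [hsk, if_neg (by simp)] at hlt
    refine decide_eq_false (fun hcon => ?_)
    exact absurd (hlt.1 hcon) (by omega)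

end Main3

theorem stmt8 (n : ℕ) (hn : 1 ≤ n) :
    Nat.card {π : Equiv.Perm (Fin n) // ¬ contains123 π ∧ ¬ contains23_1 π} = 2 ^ (n - 1) := by
  obtain ⟨m, rfl⟩ : ∃ m, n = m + 1 := ⟨n - 1, by omega⟩
  have hFbij : Function.Bijective (fun s : Fin m → Bool =>
      (⟨pm s, (avoid_iff _).2 (pm_avoids s)⟩ :
        {π : Equiv.Perm (Fin (m+1)) // ¬ contains123 π ∧ ¬ contains23_1 π})) := by
    constructor
    · intro s t h
      have h2 : pm s = pm t := congrArg Subtype.val h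
      rw [← mkS_pm s, ← mkS_pm t, h2]
    · rintro ⟨π, hπ⟩
      refine ⟨mkS π, ?_⟩
      have H := (avoid_iff π).1 hπ
      have hfun : ((pm (mkS π)).symm : Fin (m+1) → Fin (m+1)) = (π.symm : Fin (m+1) → Fin (m+1)) :=
        bij_order_unique _ _ (Equiv.bijective _) (Equiv.bijective _)
          (fun v w => by rw [pm_symm_lt, ← order_iff π H])
      have heq : (pm (mkS π)).symm = π.symm := Equiv.coe_fn_injective hfun
      have hpm : pm (mkS π) = π := by
        have := congrArg Equiv.symm heq
        simpa using this
      exact Subtype.ext hpm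
  rw [Nat.card_congr (Equiv.ofBijective _ hFbij).symm]
  rw [Nat.card_eq_fintype_card]
  simp
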